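/- Let w be a trapezoidal word over {a,b}. If w is closed, then H_w = K_w and L_w = R_w; if w is open, then H_w = R_w and L_w = K_w. -/

import Mathlib

/-- The two-letter alphabet {a, b}. -/
inductive AB : Type
  | a : AB
  | b : AB
deriving DecidableEq, Repr

/-- A (finite) word over {a, b}. -/
abbrev Word := List AB

open AB

/-- `u` occurs in `w` at position `i`. -/
def OccursAt (u w : Word) (i : ℕ) : Prop :=
  i + u.length ≤ w.length ∧ (w.drop i).take u.length = u

/-- `u` occurs exactly once in `w` (is unrepeated in `w`). -/
def OccursOnce (u w : Word) : Prop := ∃! i, OccursAt u w i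

/-- `u` is a right special factor of `w`: both `ua` and `ub` are factors of `w`. -/
def IsRightSpecial (u w : Word) : Prop := (u ++ [a]) <:+: w ∧ (u ++ [b]) <:+: w

/-- `u` is a left special factor of `w`: both `au` and `bu` are factors of `w`. -/
def IsLeftSpecial (u w : Word) : Prop := ([a] ++ u) <:+: w ∧ ([b] ++ u) <:+: w

/-- `K w`: the length of the shortest unrepeated suffix of `w`. -/
noncomputable def Kp (w : Word) : ℕ := sInf {n | ∃ s : Word, s <:+ w ∧ s.length = n ∧ OccursOnce s w}

/-- `H w`: the length of the shortest unrepeated prefix of `w`. -/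
noncomputable def Hp (w : Word) : ℕ := sInf {n | ∃ p : Word, p <+: w ∧ p.length = n ∧ OccursOnce p w}

/-- `R w`: the smallest `n ≥ 0` such that `w` has no right special factor of length `n`. -/
noncomputable def Rp (w : Word) : ℕ := sInf {n | ∀ u : Word, u.length = n → ¬ IsRightSpecial u w}

/-- `L w`: the smallest `n ≥ 0` such that `w` has no left special factor of length `n`. -/
noncomputable def Lp (w : Word) : ℕ := sInf {n | ∀ u : Word, u.length = n → ¬ IsLeftSpecial u w}

/-- A word `w` is trapezoidal if `|w| = K w + R w`. -/
def IsTrapezoidal (w : Word) : Prop := w.length = Kp w + Rp w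

/-- A finite word over `{a,b}` is Sturmian iff it is balanced: there is no word `u`
with both `aua` and `bub` factors of `w`. -/
def IsSturmian (w : Word) : Prop :=
  ¬ ∃ u : Word, ([a] ++ u ++ [a]) <:+: w ∧ ([b] ++ u ++ [b]) <:+: w

/-- A nonempty word is closed if it has a border (a proper prefix which is also a suffix)
whose only occurrences in `w` are as a prefix and as a suffix. -/
def IsClosedWord (w : Word) : Prop :=
  w ≠ [] ∧ ∃ v : Word, v <+: w ∧ v.length < w.length ∧ v <:+ w ∧
    ∀ i : ℕ, OccursAt v w i → i = 0 ∨ i + v.length = w.length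

/-- A nonempty word is open if it is not closed. -/
def IsOpenWord (w : Word) : Prop := w ≠ [] ∧ ¬ IsClosedWord w

/-- Central words: `a^n`, `b^n`, or `u a b v = v b a u`. -/
def IsCentral (w : Word) : Prop :=
  (∃ n : ℕ, w = List.replicate n a) ∨ (∃ n : ℕ, w = List.replicate n b) ∨
  (∃ u v : Word, w = u ++ [a, b] ++ v ∧ w = v ++ [b, a] ++ u)

/-- The minimal period of `w`: `|w|` minus the length of the longest border of `w`. -/
noncomputable def minPeriod (w : Word) : ℕ :=
  w.length - sSup {n | ∃ v : Word, v.length = n ∧ v <+: w ∧ v ≠ w ∧ v <:+ w}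

/-!
Let `f n` be the number of factors of `w` of length `n`, and `sR n`, `sL n` the numbers of right
and left special ones. Sorting the factors of length `n + 1` by their prefix of length `n`: a factor
has two right extensions iff it is right special, and none iff it is the unrepeated suffix, so
`f (n + 1) + [K ≤ n] = f n + sR n` for `n ≤ |w|`; applied to the reversed word this gives
`f (n + 1) + [H ≤ n] = f n + sL n`, hence `sR n + [H ≤ n] = sL n + [K ≤ n]` for every `n`.
Summing the first identity gives `∑_{n < R} sR n = |w| - K`, and every term is positive, so in a
trapezoidal word `sR n = 1` for all `n < R`.

If `w` is closed, with border `v`, the shortest unrepeated prefix and suffix both have length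
`|v| + 1`; so `H = K`, `sR = sL` and `R = L`. If `w` is open, its longest repeated prefix is
right special (otherwise it would be a border witnessing closedness), so `H ≤ R`. If `H < R`, a
right special factor of length `H` would end, by uniqueness, with that prefix, and its extension
would be a second occurrence of the prefix of length `H`. So `H = R`, and then
`sL n + [K ≤ n] = 1` for all `n` gives `L = K`.
-/

open List

lemma AB.forall_iff {P : AB → Prop} : (∀ c, P c) ↔ P a ∧ P b :=
  ⟨fun h => ⟨h a, h b⟩, fun h c => by cases c; exacts [h.1, h.2]⟩

section Occurrences

variable {u v w : Word} {i : ℕ}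

lemma occursAt_iff_exists_append :
    OccursAt u w i ↔ ∃ s t, s.length = i ∧ w = s ++ u ++ t := by
  constructor
  · rintro ⟨hle, htake⟩
    refine ⟨w.take i, (w.drop i).drop u.length, by rw [length_take]; omega, ?_⟩
    conv_lhs => rw [← take_append_drop i w, ← take_append_drop u.length (w.drop i), htake]
    simp
  · rintro ⟨s, t, rfl, rfl⟩
    simp [OccursAt]

lemma OccursAt.infix (h : OccursAt u w i) : u <:+: w := by
  obtain ⟨s, t, -, rfl⟩ := occursAt_iff_exists_append.1 h
  exact ⟨s, t, rfl⟩

lemma infix_iff_exists_occursAt : u <:+: w ↔ ∃ i, OccursAt u w i := by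
  refine ⟨fun ⟨s, t, h⟩ => ⟨s.length, ?_⟩, fun ⟨_, h⟩ => h.infix⟩
  exact occursAt_iff_exists_append.2 ⟨s, t, rfl, h.symm⟩

lemma occursAt_zero_iff : OccursAt u w 0 ↔ u <+: w := by
  rw [occursAt_iff_exists_append]
  constructor
  · rintro ⟨s, t, hs, rfl⟩
    simp_all
  · rintro ⟨t, rfl⟩
    exact ⟨[], t, rfl, rfl⟩

lemma occursAt_sub_length_iff (h : u.length ≤ w.length) :
    OccursAt u w (w.length - u.length) ↔ u <:+ w := by
  constructor
  · intro hocc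
    obtain ⟨s, t, hs, rfl⟩ := occursAt_iff_exists_append.1 hocc
    obtain rfl : t = [] := by simp only [append_assoc, length_append] at hs; rw [← length_eq_zero_iff]; omega
    exact ⟨s, by simp⟩
  · rintro ⟨s, rfl⟩
    exact occursAt_iff_exists_append.2 ⟨s, [], by simp, by simp⟩

lemma OccursAt.suffix (h : OccursAt u w i) (hi : i + u.length = w.length) : u <:+ w := by
  obtain rfl : i = w.length - u.length := by omega
  exact (occursAt_sub_length_iff (by omega)).1 h

lemma occursAt_append_iff :
    OccursAt (u ++ v) w i ↔ OccursAt u w i ∧ OccursAt v w (i + u.length) := by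
  constructor
  · intro h
    obtain ⟨s, t, rfl, rfl⟩ := occursAt_iff_exists_append.1 h
    exact ⟨occursAt_iff_exists_append.2 ⟨s, v ++ t, rfl, by simp⟩,
      occursAt_iff_exists_append.2 ⟨s ++ u, t, by simp, by simp⟩⟩
  · rintro ⟨hu, hv⟩
    obtain ⟨s, t, rfl, rfl⟩ := occursAt_iff_exists_append.1 hu
    have hvt : t.take v.length = v := by simpa [OccursAt] using hv.2
    refine occursAt_iff_exists_append.2 ⟨s, t.drop v.length, rfl, ?_⟩
    conv_lhs => rw [← take_append_drop v.length t, hvt]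
    simp

lemma OccursAt.exists_append_singleton (h : OccursAt u w i) (hi : i + u.length < w.length) :
    ∃ c, OccursAt (u ++ [c]) w i :=
  ⟨w[i + u.length], occursAt_append_iff.2
    ⟨h, by simp only [length_singleton]; omega, by rw [drop_eq_getElem_cons hi]; rfl⟩⟩

lemma OccursAt.reverse (h : OccursAt u w i) :
    OccursAt u.reverse w.reverse (w.length - u.length - i) := by
  obtain ⟨s, t, rfl, rfl⟩ := occursAt_iff_exists_append.1 h
  exact occursAt_iff_exists_append.2 ⟨t.reverse, s.reverse, by simp only [length_reverse, append_assoc, length_append]; omega, by simp⟩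

end Occurrences

section Unrepeated

variable {u v w : Word}

lemma occursOnce_self (w : Word) : OccursOnce w w :=
  ⟨0, occursAt_zero_iff.2 prefix_rfl, fun i hi => by have := hi.1; omega⟩

lemma OccursOnce.of_infix (h : OccursOnce u w) (huv : u <:+: v) (hv : v <:+: w) :
    OccursOnce v w := by
  obtain ⟨x, y, rfl⟩ := huv
  obtain ⟨i, hi⟩ := infix_iff_exists_occursAt.1 hv
  have shift : ∀ {j}, OccursAt (x ++ u ++ y) w j → OccursAt u w (j + x.length) :=
    fun hj => (occursAt_append_iff.1 (occursAt_append_iff.1 hj).1).2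
  exact ⟨i, hi, fun j hj => by simpa using h.unique (shift hj) (shift hi)⟩

lemma OccursOnce.reverse (h : OccursOnce u w) : OccursOnce u.reverse w.reverse := by
  obtain ⟨i, hi, huniq⟩ := h
  refine ⟨_, hi.reverse, fun j hj => ?_⟩
  have hij := huniq _ (by simpa using hj.reverse)
  have hj_le := hj.1
  simp only [length_reverse] at hij hj_le ⊢
  omega

lemma Kp_le_iff (hs : v <:+ w) : Kp w ≤ v.length ↔ OccursOnce v w := by
  refine ⟨fun hK => ?_, fun h => Nat.sInf_le ⟨v, hs, rfl, h⟩⟩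
  obtain ⟨s, hsw, hlen, hs_once⟩ :=
    Nat.sInf_mem (s := {n | ∃ s : Word, s <:+ w ∧ s.length = n ∧ OccursOnce s w})
      ⟨w.length, w, suffix_rfl, rfl, occursOnce_self w⟩
  exact hs_once.of_infix (suffix_of_suffix_length_le hsw hs (hlen ▸ hK)).isInfix hs.isInfix

lemma Hp_le_iff (hp : v <+: w) : Hp w ≤ v.length ↔ OccursOnce v w := by
  refine ⟨fun hH => ?_, fun h => Nat.sInf_le ⟨v, hp, rfl, h⟩⟩
  obtain ⟨p, hpw, hlen, hp_once⟩ :=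
    Nat.sInf_mem (s := {n | ∃ p : Word, p <+: w ∧ p.length = n ∧ OccursOnce p w})
      ⟨w.length, w, prefix_rfl, rfl, occursOnce_self w⟩
  exact hp_once.of_infix (prefix_of_prefix_length_le hpw hp (hlen ▸ hH)).isInfix hp.isInfix

lemma Kp_le_length (w : Word) : Kp w ≤ w.length :=
  (Kp_le_iff suffix_rfl).2 (occursOnce_self w)

lemma Hp_le_length (w : Word) : Hp w ≤ w.length :=
  (Hp_le_iff prefix_rfl).2 (occursOnce_self w)

lemma occursOnce_take_Hp (w : Word) : OccursOnce (w.take (Hp w)) w :=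
  (Hp_le_iff (take_prefix _ _)).1 (by simp [Hp_le_length])

lemma one_le_Hp (hw : w ≠ []) : 1 ≤ Hp w := by
  by_contra! h0
  have hnil : OccursOnce [] w := (Hp_le_iff (nil_prefix (l := w))).1 (by simpa using h0)
  have hw1 : OccursAt [] w 1 := ⟨length_pos_iff.2 hw, rfl⟩
  exact absurd (hnil.unique (occursAt_zero_iff.2 nil_prefix) hw1) zero_ne_one

lemma Kp_reverse (w : Word) : Kp w.reverse = Hp w := by
  unfold Kp Hp
  congr 1
  ext n
  constructor
  · rintro ⟨s, hs, rfl, h⟩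
    exact ⟨s.reverse, by simpa using reverse_prefix.2 hs, length_reverse,
      by simpa using h.reverse⟩
  · rintro ⟨p, hp, rfl, h⟩
    exact ⟨p.reverse, reverse_suffix.2 hp, length_reverse, h.reverse⟩

lemma no_right_extension_iff (hu : u <:+: w) :
    (∀ c : AB, ¬ u ++ [c] <:+: w) ↔ u <:+ w ∧ OccursOnce u w := by
  constructor
  · intro hno
    have hfinal : ∀ i, OccursAt u w i → i + u.length = w.length := by
      intro i hi
      by_contra hne
      obtain ⟨c, hc⟩ := hi.exists_append_singleton (lt_of_le_of_ne hi.1 hne)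
      exact hno c hc.infix
    obtain ⟨i, hi⟩ := infix_iff_exists_occursAt.1 hu
    exact ⟨hi.suffix (hfinal i hi), i, hi, fun j hj => by
      have := hfinal i hi; have := hfinal j hj; omega⟩
  · rintro ⟨hs, honce⟩ c hc
    obtain ⟨i, hi⟩ := infix_iff_exists_occursAt.1 hc
    have hi_end := honce.unique (occursAt_append_iff.1 hi).1
      ((occursAt_sub_length_iff hs.length_le).2 hs)
    have hi_le := hi.1
    simp only [length_append, length_singleton] at hi_le
    omega

end Unrepeated

section Special

variable {u v w : Word}

lemma IsRightSpecial.append_infix (h : IsRightSpecial u w) (c : AB) : u ++ [c] <:+: w := by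
  cases c
  exacts [h.1, h.2]

lemma isRightSpecial_of_ne {c d : AB} (hcd : c ≠ d) (hc : u ++ [c] <:+: w)
    (hd : u ++ [d] <:+: w) : IsRightSpecial u w := by
  cases c <;> cases d
  exacts [absurd rfl hcd, ⟨hc, hd⟩, ⟨hd, hc⟩, absurd rfl hcd]

lemma IsRightSpecial.of_suffix (h : IsRightSpecial v w) (huv : u <:+ v) : IsRightSpecial u w := by
  obtain ⟨x, rfl⟩ := huv
  exact ⟨(infix_append x _ []).trans (by simpa using h.1),
    (infix_append x _ []).trans (by simpa using h.2)⟩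

lemma lt_Rp_iff {n : ℕ} : n < Rp w ↔ ∃ u : Word, u.length = n ∧ IsRightSpecial u w := by
  constructor
  · intro h
    by_contra! hn
    exact Nat.notMem_of_lt_sInf h hn
  · rintro ⟨u, rfl, hu⟩
    by_contra! hle
    have hmem : Rp w ∈ {n | ∀ u : Word, u.length = n → ¬ IsRightSpecial u w} :=
      Nat.sInf_mem ⟨w.length, fun u hu hRS => by simpa [hu] using hRS.1.length_le⟩
    exact hmem (u.drop (u.length - Rp w)) (by rw [length_drop]; omega) (hu.of_suffix (drop_suffix _ _))

lemma Rp_le_length (w : Word) : Rp w ≤ w.length := by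
  refine not_lt.1 fun h => ?_
  obtain ⟨u, hu, hRS⟩ := lt_Rp_iff.1 h
  simpa [hu] using hRS.1.length_le

lemma isRightSpecial_reverse_iff : IsRightSpecial u.reverse w.reverse ↔ IsLeftSpecial u w := by
  simp only [IsRightSpecial, IsLeftSpecial]
  rw [← reverse_infix (l₁ := [a] ++ u), ← reverse_infix (l₁ := [b] ++ u)]
  simp

lemma Rp_reverse (w : Word) : Rp w.reverse = Lp w := by
  unfold Rp Lp
  congr 1
  ext n
  constructor
  · intro h u hu hLS
    exact h u.reverse (by simp [hu]) (isRightSpecial_reverse_iff.2 hLS)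
  · intro h u hu hRS
    exact h u.reverse (by simp [hu]) (isRightSpecial_reverse_iff.1 (by simpa using hRS))

end Special

instance (u w : Word) : Decidable (IsRightSpecial u w) := inferInstanceAs (Decidable (_ ∧ _))

instance (u w : Word) : Decidable (IsLeftSpecial u w) := inferInstanceAs (Decidable (_ ∧ _))

section Counting

variable {u w : Word} {n : ℕ}

def factorsOfLength (w : Word) (n : ℕ) : Finset Word :=
  (w.tails.map (take n)).toFinset.filter (·.length = n)

def numRightSpecial (w : Word) (n : ℕ) : ℕ :=
  ((factorsOfLength w n).filter (IsRightSpecial · w)).card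

def numLeftSpecial (w : Word) (n : ℕ) : ℕ :=
  ((factorsOfLength w n).filter (IsLeftSpecial · w)).card

lemma mem_factorsOfLength : u ∈ factorsOfLength w n ↔ u <:+: w ∧ u.length = n := by
  simp only [factorsOfLength, Finset.mem_filter, List.mem_toFinset, List.mem_map, mem_tails,
    infix_iff_prefix_suffix]
  constructor
  · rintro ⟨⟨t, ht, rfl⟩, hlen⟩
    exact ⟨⟨t, take_prefix _ _, ht⟩, hlen⟩
  · rintro ⟨⟨t, hut, ht⟩, rfl⟩
    exact ⟨⟨t, ht, (prefix_iff_eq_take.1 hut).symm⟩, rfl⟩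

lemma card_factorsOfLength_zero (w : Word) : (factorsOfLength w 0).card = 1 := by
  rw [Finset.card_eq_one]
  refine ⟨[], Finset.ext fun u => ?_⟩
  rw [mem_factorsOfLength, Finset.mem_singleton, length_eq_zero_iff]
  exact ⟨And.right, fun h => ⟨h ▸ nil_infix, h⟩⟩

lemma factorsOfLength_eq_empty (h : w.length < n) : factorsOfLength w n = ∅ := by
  ext u
  simp only [mem_factorsOfLength, Finset.notMem_empty, iff_false, not_and]
  intro hu hlen
  have := hu.length_le
  omega

lemma reverse_mem_factorsOfLength_reverse :
    u.reverse ∈ factorsOfLength w.reverse n ↔ u ∈ factorsOfLength w n := by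
  simp [mem_factorsOfLength]

lemma card_factorsOfLength_reverse (w : Word) (n : ℕ) :
    (factorsOfLength w.reverse n).card = (factorsOfLength w n).card :=
  Finset.card_nbij' reverse reverse
    (fun u hu => by simpa using reverse_mem_factorsOfLength_reverse.1 (by simpa using hu))
    (fun u hu => reverse_mem_factorsOfLength_reverse.2 hu)
    (fun u _ => reverse_reverse u) (fun u _ => reverse_reverse u)

lemma numRightSpecial_reverse (w : Word) (n : ℕ) :
    numRightSpecial w.reverse n = numLeftSpecial w n := by
  refine Finset.card_nbij' reverse reverse (fun u hu => ?_) (fun u hu => ?_)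
    (fun u _ => reverse_reverse u) (fun u _ => reverse_reverse u)
  · simp only [Finset.coe_filter, Set.mem_ofPred_eq] at hu ⊢
    rw [← isRightSpecial_reverse_iff, ← reverse_mem_factorsOfLength_reverse, reverse_reverse]
    simpa using hu
  · simp only [Finset.coe_filter, Set.mem_ofPred_eq] at hu ⊢
    rwa [reverse_mem_factorsOfLength_reverse, isRightSpecial_reverse_iff]

lemma IsRightSpecial.mem_filter_factorsOfLength (h : IsRightSpecial u w) :
    u ∈ (factorsOfLength w u.length).filter (IsRightSpecial · w) :=
  Finset.mem_filter.2
    ⟨mem_factorsOfLength.2 ⟨(prefix_append _ _).isInfix.trans h.1, rfl⟩, h⟩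

lemma numRightSpecial_pos_iff : 0 < numRightSpecial w n ↔ n < Rp w := by
  rw [numRightSpecial, Finset.card_pos, lt_Rp_iff]
  constructor
  · rintro ⟨u, hu⟩
    rw [Finset.mem_filter, mem_factorsOfLength] at hu
    exact ⟨u, hu.1.2, hu.2⟩
  · rintro ⟨u, rfl, hu⟩
    exact ⟨u, hu.mem_filter_factorsOfLength⟩

lemma numLeftSpecial_pos_iff : 0 < numLeftSpecial w n ↔ n < Lp w := by
  rw [← numRightSpecial_reverse, numRightSpecial_pos_iff, Rp_reverse]

open Classical in
lemma card_filter_take_eq_add_ite (hu : u <:+: w) :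
    ((factorsOfLength w (u.length + 1)).filter (·.take u.length = u)).card
      + (if u <:+ w ∧ OccursOnce u w then 1 else 0)
      = 1 + (if IsRightSpecial u w then 1 else 0) := by
  have hfiber : (factorsOfLength w (u.length + 1)).filter (·.take u.length = u)
      = ({u ++ [a], u ++ [b]} : Finset Word).filter (· <:+: w) := by
    ext v
    simp only [Finset.mem_filter, mem_factorsOfLength, Finset.mem_insert, Finset.mem_singleton]
    constructor
    · rintro ⟨⟨hv, hlen⟩, htake⟩
      rcases v.eq_nil_or_concat' with rfl | ⟨x, c, rfl⟩
      · simp at hlen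
      · rw [take_left' (by simpa using hlen)] at htake
        subst htake
        cases c <;> simp [hv]
    · rintro ⟨rfl | rfl, hv⟩ <;> simp [hv]
  rw [hfiber, Finset.card_filter, Finset.sum_pair (by simp)]
  simp only [← no_right_extension_iff hu, AB.forall_iff]
  by_cases ha : u ++ [a] <:+: w <;> by_cases hb : u ++ [b] <:+: w <;>
    simp [IsRightSpecial, ha, hb]

end Counting

section Identities

variable {w : Word} {n : ℕ}

open Classical in
lemma card_filter_suffix_occursOnce (hn : n ≤ w.length) :
    ((factorsOfLength w n).filter fun u => u <:+ w ∧ OccursOnce u w).card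
      = if Kp w ≤ n then 1 else 0 := by
  set s := w.drop (w.length - n)
  have hs : s <:+ w := drop_suffix _ _
  have hslen : s.length = n := by simp only [s, length_drop]; omega
  have hfilter : (factorsOfLength w n).filter (fun u => u <:+ w ∧ OccursOnce u w)
      = ({s} : Finset Word).filter (OccursOnce · w) := by
    ext u
    simp only [Finset.mem_filter, mem_factorsOfLength, Finset.mem_singleton]
    constructor
    · rintro ⟨⟨-, hlen⟩, hu, h⟩
      exact ⟨(suffix_of_suffix_length_le hu hs (by omega)).eq_of_length (by omega), h⟩
    · rintro ⟨rfl, h⟩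
      exact ⟨⟨hs.isInfix, hslen⟩, hs, h⟩
  rw [hfilter, Finset.filter_singleton, apply_ite Finset.card, Finset.card_singleton,
    Finset.card_empty]
  exact if_congr (by rw [← hslen, Kp_le_iff hs]) rfl rfl

lemma card_factorsOfLength_succ_add_ite_Kp (hn : n ≤ w.length) :
    (factorsOfLength w (n + 1)).card + (if Kp w ≤ n then 1 else 0)
      = (factorsOfLength w n).card + numRightSpecial w n := by
  classical
  have hmaps : Set.MapsTo (take n) (factorsOfLength w (n + 1) : Set Word)
      (factorsOfLength w n : Set Word) := by
    intro v hv
    obtain ⟨hv, hlen⟩ := mem_factorsOfLength.1 hv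
    exact mem_factorsOfLength.2 ⟨(take_prefix n v).isInfix.trans hv, by simp [hlen]⟩
  rw [Finset.card_eq_sum_card_fiberwise hmaps, ← card_filter_suffix_occursOnce hn,
    Finset.card_filter, ← Finset.sum_add_distrib, numRightSpecial, Finset.card_filter,
    Finset.card_eq_sum_ones, ← Finset.sum_add_distrib]
  refine Finset.sum_congr rfl fun u hu => ?_
  obtain ⟨hinf, rfl⟩ := mem_factorsOfLength.1 hu
  exact card_filter_take_eq_add_ite hinf

lemma card_factorsOfLength_succ_add_ite_Hp (hn : n ≤ w.length) :
    (factorsOfLength w (n + 1)).card + (if Hp w ≤ n then 1 else 0)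
      = (factorsOfLength w n).card + numLeftSpecial w n := by
  simpa only [card_factorsOfLength_reverse, Kp_reverse, numRightSpecial_reverse] using
    card_factorsOfLength_succ_add_ite_Kp (w := w.reverse) (by simpa using hn)

lemma numRightSpecial_add_ite (w : Word) (n : ℕ) :
    numRightSpecial w n + (if Hp w ≤ n then 1 else 0)
      = numLeftSpecial w n + (if Kp w ≤ n then 1 else 0) := by
  rcases le_or_gt n w.length with hn | hn
  · have := card_factorsOfLength_succ_add_ite_Kp hn
    have := card_factorsOfLength_succ_add_ite_Hp hn
    omega
  · have := Hp_le_length w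
    have := Kp_le_length w
    simp only [numRightSpecial, numLeftSpecial, factorsOfLength_eq_empty hn,
      Finset.filter_empty, Finset.card_empty]
    rw [if_pos (by omega), if_pos (by omega)]

lemma card_factorsOfLength_add_sub_Kp {N : ℕ} (hN : N ≤ w.length + 1) :
    (factorsOfLength w N).card + (N - Kp w)
      = 1 + ∑ n ∈ Finset.range N, numRightSpecial w n := by
  induction N with
  | zero => simp [card_factorsOfLength_zero]
  | succ N ih =>
    have h := card_factorsOfLength_succ_add_ite_Kp (w := w) (n := N) (by omega)
    have := ih (by omega)
    rw [Finset.sum_range_succ]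
    split_ifs at h <;> omega

lemma sum_numRightSpecial_add_Kp (w : Word) :
    ∑ n ∈ Finset.range (Rp w), numRightSpecial w n + Kp w = w.length := by
  have h := card_factorsOfLength_add_sub_Kp (w := w) le_rfl
  rw [factorsOfLength_eq_empty (lt_add_one _), Finset.card_empty,
    ← Finset.sum_subset (Finset.range_subset_range.2 (Nat.le_succ_of_le (Rp_le_length w)))] at h
  · have := Kp_le_length w
    omega
  · intro n _ hn
    by_contra hne
    exact hn (Finset.mem_range.2 (numRightSpecial_pos_iff.1 (Nat.pos_of_ne_zero hne)))

end Identities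

section Trapezoidal

variable {u v w : Word}

lemma IsTrapezoidal.numRightSpecial_eq (htrap : IsTrapezoidal w) (n : ℕ) :
    numRightSpecial w n = if n < Rp w then 1 else 0 := by
  have hone : ∀ k ∈ Finset.range (Rp w), 1 = numRightSpecial w k := by
    refine (Finset.sum_eq_sum_iff_of_le fun k hk => ?_).1 ?_
    · exact numRightSpecial_pos_iff.2 (Finset.mem_range.1 hk)
    · have := sum_numRightSpecial_add_Kp w
      rw [Finset.sum_const, Finset.card_range, smul_eq_mul, mul_one]
      unfold IsTrapezoidal at htrap
      omega
  split_ifs with h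
  · exact (hone n (Finset.mem_range.2 h)).symm
  · exact Nat.eq_zero_of_not_pos (mt numRightSpecial_pos_iff.1 h)

lemma IsTrapezoidal.eq_of_isRightSpecial (htrap : IsTrapezoidal w) (hu : IsRightSpecial u w)
    (hv : IsRightSpecial v w) (hlen : u.length = v.length) : u = v := by
  have hcard := htrap.numRightSpecial_eq u.length
  rw [if_pos (lt_Rp_iff.2 ⟨u, rfl, hu⟩)] at hcard
  exact Finset.card_le_one.1 hcard.le u hu.mem_filter_factorsOfLength v
    (hlen ▸ hv.mem_filter_factorsOfLength)

end Trapezoidal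

section Closed

variable {v w : Word}

lemma Hp_eq_of_border (hvp : v <+: w) (hlt : v.length < w.length) (hvs : v <:+ w)
    (hocc : ∀ i, OccursAt v w i → i = 0 ∨ i + v.length = w.length) :
    Hp w = v.length + 1 := by
  have hrep : ¬ OccursOnce v w := fun h => by
    have := h.unique (occursAt_zero_iff.2 hvp) ((occursAt_sub_length_iff hlt.le).2 hvs)
    omega
  set p := w.take (v.length + 1)
  have hp : p <+: w := take_prefix _ _
  have hplen : p.length = v.length + 1 := by simp only [p, length_take]; omega
  have hp_once : OccursOnce p w := by
    refine ⟨0, occursAt_zero_iff.2 hp, fun i (hi : OccursAt p w i) => ?_⟩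
    obtain ⟨x, hx⟩ : v <+: p := prefix_take_iff.2 ⟨hvp, Nat.le_succ _⟩
    have hi_le := hi.1
    rw [← hx] at hi
    have := hocc i (occursAt_append_iff.1 hi).1
    omega
  refine le_antisymm (hplen ▸ (Hp_le_iff hp).2 hp_once) ?_
  exact Nat.succ_le_of_lt (not_le.1 (mt (Hp_le_iff hvp).1 hrep))

lemma Kp_eq_of_border (hvp : v <+: w) (hlt : v.length < w.length) (hvs : v <:+ w)
    (hocc : ∀ i, OccursAt v w i → i = 0 ∨ i + v.length = w.length) :
    Kp w = v.length + 1 := by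
  have hrep : ¬ OccursOnce v w := fun h => by
    have := h.unique (occursAt_zero_iff.2 hvp) ((occursAt_sub_length_iff hlt.le).2 hvs)
    omega
  set s := w.drop (w.length - (v.length + 1))
  have hs : s <:+ w := drop_suffix _ _
  have hslen : s.length = v.length + 1 := by simp only [s, length_drop]; omega
  have hs_once : OccursOnce s w := by
    refine ⟨_, (occursAt_sub_length_iff hs.length_le).2 hs, fun i (hi : OccursAt s w i) => ?_⟩
    obtain ⟨x, hx⟩ := suffix_of_suffix_length_le hvs hs (by omega)
    have hi_le := hi.1
    have hxlen : x.length + v.length = s.length := by rw [← hx, length_append]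
    rw [← hx] at hi
    have := hocc _ (occursAt_append_iff.1 hi).2
    omega
  refine le_antisymm (hslen ▸ (Kp_le_iff hs).2 hs_once) ?_
  exact Nat.succ_le_of_lt (not_le.1 (mt (Kp_le_iff hvs).1 hrep))

lemma IsClosedWord.Hp_eq_Kp (hc : IsClosedWord w) : Hp w = Kp w := by
  obtain ⟨-, v, hvp, hlt, hvs, hocc⟩ := hc
  rw [Hp_eq_of_border hvp hlt hvs hocc, Kp_eq_of_border hvp hlt hvs hocc]

lemma IsClosedWord.Lp_eq_Rp (hc : IsClosedWord w) : Lp w = Rp w := by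
  refine eq_of_forall_lt_iff fun n => ?_
  have h := numRightSpecial_add_ite w n
  rw [hc.Hp_eq_Kp, add_left_inj] at h
  rw [← numLeftSpecial_pos_iff, ← numRightSpecial_pos_iff, h]

end Closed

section Open

variable {u w : Word} {i : ℕ}

lemma OccursAt.append_of_not_isRightSpecial {c : AB} (h : OccursAt u w i)
    (hRS : ¬ IsRightSpecial u w) (hc : u ++ [c] <:+: w) (hi : i + u.length < w.length) :
    OccursAt (u ++ [c]) w i := by
  obtain ⟨d, hd⟩ := h.exists_append_singleton hi
  by_cases hcd : c = d
  · rwa [hcd]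
  · exact absurd (isRightSpecial_of_ne hcd hc hd.infix) hRS

lemma IsOpenWord.isRightSpecial_take (ho : IsOpenWord w) :
    IsRightSpecial (w.take (Hp w - 1)) w := by
  obtain ⟨hw, hnc⟩ := ho
  have hH := one_le_Hp hw
  have hHw := Hp_le_length w
  set v := w.take (Hp w - 1)
  have hvp : v <+: w := take_prefix _ _
  have hvlen : v.length = Hp w - 1 := by simp only [v, length_take]; omega
  obtain ⟨c, hvc⟩ : ∃ c, w.take (Hp w) = v ++ [c] :=
    ⟨_, by rw [← take_succ_eq_append_getElem (by omega), Nat.sub_add_cancel hH]⟩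
  have hvc_once : OccursOnce (v ++ [c]) w := hvc ▸ occursOnce_take_Hp w
  have hvc_zero : OccursAt (v ++ [c]) w 0 := occursAt_zero_iff.2 (hvc ▸ take_prefix _ _)
  obtain ⟨i, hi, hi0⟩ : ∃ i, OccursAt v w i ∧ i ≠ 0 := by
    by_contra! h
    have := (Hp_le_iff hvp).2 ⟨0, occursAt_zero_iff.2 hvp, h⟩
    omega
  by_contra hRS
  -- every non-final occurrence of `v` extends to one of the prefix `v ++ [c]`
  have hocc : ∀ k, OccursAt v w k → k = 0 ∨ k + v.length = w.length := by
    refine fun k hk => or_iff_not_imp_right.2 fun hend => hvc_once.unique ?_ hvc_zero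
    exact hk.append_of_not_isRightSpecial hRS hvc_zero.infix (lt_of_le_of_ne hk.1 hend)
  exact hnc ⟨hw, v, hvp, by omega, hi.suffix ((hocc i hi).resolve_left hi0), hocc⟩

lemma IsOpenWord.Hp_le_Rp (ho : IsOpenWord w) : Hp w ≤ Rp w := by
  have hlt := lt_Rp_iff.2 ⟨_, rfl, ho.isRightSpecial_take⟩
  have := one_le_Hp ho.1
  have := Hp_le_length w
  rw [length_take] at hlt
  omega

lemma IsTrapezoidal.Hp_eq_Rp_of_isOpenWord (htrap : IsTrapezoidal w) (ho : IsOpenWord w) :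
    Hp w = Rp w := by
  refine le_antisymm ho.Hp_le_Rp (not_lt.1 fun hlt => ?_)
  obtain ⟨u, hulen, hu⟩ := lt_Rp_iff.1 hlt
  have hH := one_le_Hp ho.1
  have hHw := Hp_le_length w
  obtain ⟨c, t, rfl⟩ := exists_cons_of_ne_nil (by rintro rfl; simp only [length_nil] at hulen; omega : u ≠ [])
  have ht : t = w.take (Hp w - 1) :=
    htrap.eq_of_isRightSpecial (hu.of_suffix (suffix_cons c t)) ho.isRightSpecial_take
      (by simp only [length_cons, length_take] at hulen ⊢; omega)
  subst ht
  have htake : w.take (Hp w) = w.take (Hp w - 1) ++ [w[Hp w - 1]] := by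
    rw [← take_succ_eq_append_getElem (by omega), Nat.sub_add_cancel hH]
  -- `c :: w.take (Hp w)` occurs, giving an occurrence of `w.take (Hp w)` at a position `j + 1`
  obtain ⟨j, hj⟩ := infix_iff_exists_occursAt.1 (hu.append_infix w[Hp w - 1])
  rw [cons_append, ← htake] at hj
  have := (occursOnce_take_Hp w).unique (occursAt_append_iff (u := [c]).1 hj).2
    (occursAt_zero_iff.2 (take_prefix _ _))
  simp at this

lemma IsTrapezoidal.Lp_eq_Kp_of_isOpenWord (htrap : IsTrapezoidal w) (ho : IsOpenWord w) :
    Lp w = Kp w := by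
  refine eq_of_forall_lt_iff fun n => ?_
  have h := numRightSpecial_add_ite w n
  rw [htrap.numRightSpecial_eq, htrap.Hp_eq_Rp_of_isOpenWord ho] at h
  rw [← numLeftSpecial_pos_iff]
  split_ifs at h <;> omega

end Open

/-- for trapezoidal words, `H = K`, `L = R` if closed and `H = R`, `L = K` if open. -/
theorem trapezoidal_param_identities (w : Word) (htrap : IsTrapezoidal w) :
    (IsClosedWord w → Hp w = Kp w ∧ Lp w = Rp w) ∧
    (IsOpenWord w → Hp w = Rp w ∧ Lp w = Kp w) :=
  ⟨fun hc => ⟨hc.Hp_eq_Kp, hc.Lp_eq_Rp⟩,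
    fun ho => ⟨htrap.Hp_eq_Rp_of_isOpenWord ho, htrap.Lp_eq_Kp_of_isOpenWord ho⟩⟩
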